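/- Let X be a zero-nonzero pattern and M a matroid in R(X). Then the lattice L(X) is contained in the lattice of flats of M, and consequently the height of L(X) is at most the rank of M. In particular, the triangle number of X (which equals the height of L(X)) is a lower bound on the matroid minimum rank of X. -/

import Mathlib

open Set

variable {α β : Type*}

/-- The rank of a matroid: the (common) cardinality of its bases. -/
noncomputable def Matroid.mrk (M : Matroid α) : ℕ := sSup (Set.ncard '' {B | M.IsBase B})

/-- A hyperplane of a matroid: a maximal proper flat
(equivalently, a flat of rank `r(M) - 1`). -/
def Matroid.IsHyperplane (M : Matroid α) (H : Set α) : Prop :=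
  M.IsFlat H ∧ H ≠ M.E ∧ ∀ F, M.IsFlat F → H ⊆ F → F = H ∨ F = M.E

/-- A circuit of a matroid: a minimal dependent set. -/
def Matroid.IsCircuit' (M : Matroid α) (Ct : Set α) : Prop :=
  Ct ⊆ M.E ∧ ¬ M.Indep Ct ∧ ∀ D, D ⊂ Ct → M.Indep D

/-- A point of a matroid: a rank-one flat, i.e. the closure of a nonloop. -/
def Matroid.IsPoint (M : Matroid α) (P : Set α) : Prop :=
  M.IsFlat P ∧ ∃ e, e ∉ M.closure ∅ ∧ P = M.closure {e}

variable {R C : Type*}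

/-- Zero set of a set of columns: rows that are zero in every column of `A`. -/
def ZCol (X : R → C → Bool) (A : Set C) : Set R := {r | ∀ a ∈ A, X r a = false}

/-- Zero set of a set of rows: columns that are zero in every row of `B`. -/
def ZRow (X : R → C → Bool) (B : Set R) : Set C := {c | ∀ b ∈ B, X b c = false}

/-- The intersection lattice of a pattern. -/
def LX (X : R → C → Bool) : Set (Set C) := {F | ∃ S : Set R, F = ZRow X S}

/-- The class of matroids associated with a pattern `X`: matroids on the column
set in which the zero set of every row of `X` is a flat. -/
def RX (X : R → C → Bool) : Set (Matroid C) :=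
  {M | M.E = Set.univ ∧ ∀ r : R, M.IsFlat (ZRow X {r})}

/-- The matroid minimum rank of a pattern. -/
noncomputable def mr (X : R → C → Bool) : ℕ := sInf (Matroid.mrk '' RX X)

/-! The zero set of a set of rows is the intersection of the zero sets of its rows, so it is a
flat of every `M ∈ R(X)`. Along a strict chain of flats `F ⊂ G` the rank goes up by at least one,
because an element of `G \ F` lies outside `closure F = F`; hence a chain of length `n` in `L(X)`
forces rank at least `n`. -/

namespace Matroid

lemma mrk_eq_toNat_eRank (M : Matroid α) : M.mrk = M.eRank.toNat := by
  obtain ⟨B, hB⟩ := M.exists_isBase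
  have hbases : ncard '' {B | M.IsBase B} = {M.eRank.toNat} := by
    refine Set.eq_singleton_iff_unique_mem.mpr ⟨⟨B, hB, ?_⟩, ?_⟩
    · rw [ncard_def, hB.encard_eq_eRank]
    · rintro _ ⟨B', hB', rfl⟩
      rw [ncard_def, hB'.encard_eq_eRank]
  rw [mrk, hbases, csSup_singleton]

lemma natCast_le_mrk_of_le_eRank (M : Matroid α) [M.RankFinite] {n : ℕ}
    (hn : (n : ℕ∞) ≤ M.eRank) : n ≤ M.mrk := by
  rw [mrk_eq_toNat_eRank, ← ENat.toNat_natCast n]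
  exact ENat.toNat_le_toNat hn (M.eRank_ne_top_iff.mpr ‹_›)

lemma IsFlat.eRk_add_one_le_of_ssubset {M : Matroid α} {F G : Set α} (hF : M.IsFlat F)
    (hG : M.IsFlat G) (hFG : F ⊂ G) : M.eRk F + 1 ≤ M.eRk G := by
  obtain ⟨e, heG, heF⟩ := exists_of_ssubset hFG
  have he : e ∈ M.E \ M.closure F := ⟨hG.subset_ground heG, by rwa [hF.closure]⟩
  rw [← eRk_insert_eq_add_one he]
  exact M.eRk_mono (insert_subset heG hFG.subset)

lemma natCast_le_eRk_of_strictMono_isFlat (M : Matroid α) {n : ℕ} {f : Fin (n + 1) → Set α}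
    (hf : StrictMono f) (hflat : ∀ i, M.IsFlat (f i)) (i : Fin (n + 1)) :
    ((i : ℕ) : ℕ∞) ≤ M.eRk (f i) := by
  induction i using Fin.induction with
  | zero => simp
  | succ j ih =>
    calc ((j.succ : ℕ) : ℕ∞) = (j : ℕ) + 1 := by simp
      _ ≤ M.eRk (f j.castSucc) + 1 := by gcongr; exact ih
      _ ≤ M.eRk (f j.succ) :=
        (hflat _).eRk_add_one_le_of_ssubset (hflat _) (hf j.castSucc_lt_succ)

lemma natCast_le_eRank_of_strictMono_isFlat (M : Matroid α) {n : ℕ}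
    {f : Fin (n + 1) → Set α} (hf : StrictMono f) (hflat : ∀ i, M.IsFlat (f i)) :
    (n : ℕ∞) ≤ M.eRank := by
  simpa using (M.natCast_le_eRk_of_strictMono_isFlat hf hflat (Fin.last n)).trans
    (M.eRk_le_eRank _)

end Matroid

lemma ZRow_eq_iInter (X : R → C → Bool) (S : Set R) : ZRow X S = ⋂ r ∈ S, ZRow X {r} := by
  ext c
  simp [ZRow]

lemma isFlat_of_mem_LX {X : R → C → Bool} {M : Matroid C} (hM : M ∈ RX X) {F : Set C}
    (hF : F ∈ LX X) : M.IsFlat F := by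
  obtain ⟨S, rfl⟩ := hF
  rw [ZRow_eq_iInter, biInter_eq_iInter]
  rcases isEmpty_or_nonempty S with hS | hS
  · rw [iInter_of_empty, ← hM.1]
    exact M.ground_isFlat
  · exact Matroid.IsFlat.iInter fun r ↦ hM.2 r

lemma natCast_le_mrk_of_strictMono_mem_LX {X : R → C → Bool} {M : Matroid C} [M.RankFinite]
    (hM : M ∈ RX X) {n : ℕ} {f : Fin (n + 1) → Set C} (hf : StrictMono f)
    (hLX : ∀ i, f i ∈ LX X) : n ≤ M.mrk :=
  M.natCast_le_mrk_of_le_eRank <|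
    M.natCast_le_eRank_of_strictMono_isFlat hf fun i ↦ isFlat_of_mem_LX hM (hLX i)

theorem lattice_subset_flats_and_height_le_rank_general [Fintype C]
    (X : R → C → Bool) (M : Matroid C) (hM : M ∈ RX X) :
    (∀ F ∈ LX X, M.IsFlat F) ∧
    (∀ n : ℕ, ∀ f : Fin (n + 1) → Set C, StrictMono f → (∀ i, f i ∈ LX X) →
      n ≤ M.mrk) ∧
    (∀ n : ℕ, ∀ f : Fin (n + 1) → Set C, StrictMono f → (∀ i, f i ∈ LX X) →
      n ≤ mr X) := by
  refine ⟨fun F ↦ isFlat_of_mem_LX hM,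
    fun n f hf hLX ↦ natCast_le_mrk_of_strictMono_mem_LX hM hf hLX, fun n f hf hLX ↦ ?_⟩
  refine le_csInf ⟨M.mrk, M, hM, rfl⟩ ?_
  rintro _ ⟨M', hM', rfl⟩
  exact natCast_le_mrk_of_strictMono_mem_LX hM' hf hLX

/-- for `M ∈ R(X)`, every member of `L(X)` is a flat of `M`; hence
the height of `L(X)` (the triangle number of `X`) is at most the rank of `M`, and
so it is a lower bound on the matroid minimum rank of `X`. -/
theorem lattice_subset_flats_and_height_le_rank [Fintype R] [Fintype C]
    (X : R → C → Bool) (M : Matroid C) (hM : M ∈ RX X) :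
    (∀ F ∈ LX X, M.IsFlat F) ∧
    (∀ n : ℕ, ∀ f : Fin (n + 1) → Set C, StrictMono f → (∀ i, f i ∈ LX X) →
      n ≤ M.mrk) ∧
    (∀ n : ℕ, ∀ f : Fin (n + 1) → Set C, StrictMono f → (∀ i, f i ∈ LX X) →
      n ≤ mr X) :=
  lattice_subset_flats_and_height_le_rank_general X M hM
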